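/- Let S_A = {(p,q,r,s) ∈ ℂ⁴ : q·s = r² and 256 − 192p + 48p² − 4p³ − 128q − 80pq + p²q + 16q² + 288r + 36pr − 8qr − 108s = 0} and S_P = {(p,q,r,s) ∈ ℂ⁴ : p² = s and q·s = r²}. Then S_A ∩ S_P = C₁ ∪ C₂, where C₁ = {(t², (2t−2)², (2t−2)·t², t⁴) : t ∈ ℂ} and C₂ = {(4T, (T+2)², 4T·(T+2), 16T²) : T ∈ ℂ}. -/
import Mathlib


/-- The intersection of the astroid surface `S_A = {qs = r², A_h = 0}` with the surface
`S_P = {p² = s, qs = r²}` equals the union of the two curves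
`C₁ = {(t², (2t−2)², (2t−2)t², t⁴)}` and `C₂ = {(4T, (T+2)², 4T(T+2), 16T²)}`. -/
theorem SA_inter_SP_eq_C1_union_C2 :
    {x : ℂ × ℂ × ℂ × ℂ | x.2.1 * x.2.2.2 = x.2.2.1 ^ 2 ∧
        256 - 192 * x.1 + 48 * x.1 ^ 2 - 4 * x.1 ^ 3 - 128 * x.2.1 - 80 * x.1 * x.2.1
          + x.1 ^ 2 * x.2.1 + 16 * x.2.1 ^ 2 + 288 * x.2.2.1 + 36 * x.1 * x.2.2.1
          - 8 * x.2.1 * x.2.2.1 - 108 * x.2.2.2 = 0} ∩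
      {x : ℂ × ℂ × ℂ × ℂ | x.1 ^ 2 = x.2.2.2 ∧ x.2.1 * x.2.2.2 = x.2.2.1 ^ 2}
    = {x : ℂ × ℂ × ℂ × ℂ | ∃ t : ℂ,
          ((t ^ 2, (2 * t - 2) ^ 2, (2 * t - 2) * t ^ 2, t ^ 4) : ℂ × ℂ × ℂ × ℂ) = x} ∪
      {x : ℂ × ℂ × ℂ × ℂ | ∃ T : ℂ,
          ((4 * T, (T + 2) ^ 2, 4 * T * (T + 2), 16 * T ^ 2) : ℂ × ℂ × ℂ × ℂ) = x} := by
  ext ⟨p, q, r, s⟩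
  simp only [Set.mem_inter_iff, Set.mem_union, Set.mem_setOf_eq, Prod.mk.injEq]
  constructor
  · rintro ⟨⟨hqs, hA⟩, hps, -⟩
    by_cases hp : p = 0
    · subst hp
      have hs : s = 0 := by linear_combination -hps
      have hr : r = 0 := by
        have : r ^ 2 = 0 := by linear_combination -hqs + q * hs
        exact pow_eq_zero_iff (n := 2) (by norm_num) |>.mp this
      have hq : (q - 4) ^ 2 = 0 := by
        linear_combination hA / 16 + (q / 2 - 18) * hr + 27 / 4 * hs
      have hq4 : q = 4 := by
        have := pow_eq_zero_iff (n := 2) (by norm_num) |>.mp hq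
        linear_combination this
      exact Or.inl ⟨0, by norm_num, by linear_combination -hq4, by simp [hr], by simp [hs]⟩
    · obtain ⟨w, hr⟩ : ∃ w, r = w * p := ⟨r / p, (div_mul_cancel₀ r hp).symm⟩
      have hq : q = w ^ 2 := by
        have h2 : q * p ^ 2 = w ^ 2 * p ^ 2 := by
          linear_combination hqs + q * hps + (r + w * p) * hr
        exact mul_right_cancel₀ (pow_ne_zero 2 hp) h2
      have key : (4 * p - (w + 2) ^ 2) * (p - 4 * w + 8) ^ 2 = 0 := by
        linear_combination -hA + (-128 - 80 * p + p ^ 2 + 16 * q + 16 * w ^ 2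
            - 8 * w * p) * hq + (288 + 36 * p - 8 * q) * hr + 108 * hps
      rcases mul_eq_zero.mp key with h1 | h2
      · refine Or.inl ⟨(w + 2) / 2, ?_, ?_, ?_, ?_⟩
        · linear_combination -h1 / 4
        · linear_combination -hq
        · linear_combination -w / 4 * h1 - hr
        · linear_combination (-(w + 2) ^ 2 / 16 - p / 4) * h1 + hps
      · have h2' : p - 4 * w + 8 = 0 :=
          pow_eq_zero_iff (n := 2) (by norm_num) |>.mp h2
        refine Or.inr ⟨w - 2, ?_, ?_, ?_, ?_⟩
        · linear_combination -h2'
        · linear_combination -hq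
        · linear_combination -w * h2' - hr
        · linear_combination (-p - 4 * w + 8) * h2' + hps
  · rintro (⟨t, rfl, rfl, rfl, rfl⟩ | ⟨T, rfl, rfl, rfl, rfl⟩)
    · exact ⟨⟨by ring, by ring⟩, by ring, by ring⟩
    · exact ⟨⟨by ring, by ring⟩, by ring, by ring⟩
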